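/- The group [K,G] contains X*C, the product (1*C)(0*C) of the two first-level copies of C. -/

import Mathlib

open Equiv

/-! ## The binary rooted tree and the twisted twin of the Grigorchuk group

We identify the vertex set of the infinite rooted binary tree with `V = List Bool`
(the free monoid `X*` on `X = {0,1}`), and realize automorphisms of the tree as
permutations of `V`.  The generators `a, b, c, d` of the twisted twin `G` of the
Grigorchuk group are defined by the recursive rules
`a(xw) = (¬x)w`, `ψ(b) = (c,a)`, `ψ(c) = (a,d)`, `ψ(d) = (1,b)`. -/

abbrev V : Type := List Bool

def actA : V → V
  | [] => []
  | x :: w => (!x) :: w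

theorem actA_invol : Function.Involutive actA := fun w => by
  cases w with
  | nil => rfl
  | cons x w => simp [actA]

mutual
  def actB : V → V
    | [] => []
    | false :: w => false :: actC w
    | true :: w => true :: actA w
  def actC : V → V
    | [] => []
    | false :: w => false :: actA w
    | true :: w => true :: actD w
  def actD : V → V
    | [] => []
    | false :: w => false :: w
    | true :: w => true :: actB w
end

theorem act_invol3 (w : V) :
    actB (actB w) = w ∧ actC (actC w) = w ∧ actD (actD w) = w := by
  induction w with
  | nil => exact ⟨rfl, rfl, rfl⟩
  | cons x w ih =>
    cases x <;>
      exact ⟨by simp [actB, actC, actD, ih.1, ih.2.1, ih.2.2, actA_invol w],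
        by simp [actB, actC, actD, ih.1, ih.2.1, ih.2.2, actA_invol w],
        by simp [actB, actC, actD, ih.1, ih.2.1, ih.2.2, actA_invol w]⟩

theorem actB_invol : Function.Involutive actB := fun w => (act_invol3 w).1
theorem actC_invol : Function.Involutive actC := fun w => (act_invol3 w).2.1
theorem actD_invol : Function.Involutive actD := fun w => (act_invol3 w).2.2

/-- The generator `a`: the root swap. -/
def a : Perm V := actA_invol.toPerm actA
/-- The generator `b`, with `ψ(b) = (c, a)`. -/
def b : Perm V := actB_invol.toPerm actB
/-- The generator `c`, with `ψ(c) = (a, d)`. -/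
def c : Perm V := actC_invol.toPerm actC
/-- The generator `d`, with `ψ(d) = (1, b)`. -/
def d : Perm V := actD_invol.toPerm actD

@[simp] theorem coe_a : ⇑a = actA := rfl
@[simp] theorem coe_b : ⇑b = actB := rfl
@[simp] theorem coe_c : ⇑c = actC := rfl
@[simp] theorem coe_d : ⇑d = actD := rfl

/-- The twisted twin of the Grigorchuk group. -/
def G : Subgroup (Perm V) := Subgroup.closure {a, b, c, d}

theorem a_mem_G : a ∈ G := Subgroup.subset_closure (by simp)
theorem b_mem_G : b ∈ G := Subgroup.subset_closure (by simp)
theorem c_mem_G : c ∈ G := Subgroup.subset_closure (by simp)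
theorem d_mem_G : d ∈ G := Subgroup.subset_closure (by simp)

/-- `hasState g v s` says that the state (section) of `g` at the vertex `v` is `s`,
i.e. `g (v ++ w) = g v ++ s w` for all `w`. -/
def hasState (g : Perm V) (v : V) (s : Perm V) : Prop :=
  ∀ w : V, g (v ++ w) = g v ++ s w

def vstarFun (v : V) (f : V → V) : V → V :=
  fun w => if v <+: w then v ++ f (w.drop v.length) else w

theorem vstarFun_comp (v : V) (f f' : V → V) (w : V) :
    vstarFun v f (vstarFun v f' w) = vstarFun v (f ∘ f') w := by
  by_cases h : v <+: w
  · obtain ⟨t, rfl⟩ := h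
    simp [vstarFun, List.prefix_append, List.drop_left]
  · simp [vstarFun, h]

theorem vstarFun_id (v w : V) : vstarFun v id w = w := by
  by_cases h : v <+: w
  · obtain ⟨t, rfl⟩ := h
    simp [vstarFun, List.prefix_append, List.drop_left]
  · simp [vstarFun, h]

/-- `vstar v g` is the automorphism `v * g`, acting as `g` on the subtree rooted
at `v` and trivially elsewhere. -/
def vstar (v : V) (g : Perm V) : Perm V where
  toFun := vstarFun v g
  invFun := vstarFun v g.symm
  left_inv := fun w => by
    rw [vstarFun_comp, Equiv.symm_comp_self]
    exact vstarFun_id v w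
  right_inv := fun w => by
    rw [vstarFun_comp, Equiv.self_comp_symm]
    exact vstarFun_id v w

/-- `XstarSub n H` is the subgroup `Xⁿ * H`: the product of the copies `v * H`
over all vertices `v` of level `n` (equivalently, the subgroup they generate). -/
def XstarSub (n : ℕ) (H : Subgroup (Perm V)) : Subgroup (Perm V) :=
  Subgroup.closure {p | ∃ v : V, ∃ g : Perm V, v.length = n ∧ g ∈ H ∧ p = vstar v g}

/-- `pairPerm s₀ s₁ = ψ⁻¹(s₀, s₁)`: the first-level stabilizer element whose states
at the vertices `0` and `1` are `s₀` and `s₁`. -/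
def pairPerm (s₀ s₁ : Perm V) : Perm V := vstar [false] s₀ * vstar [true] s₁

/-- The permutations fixing every vertex of level `n`. -/
def stabLevel (n : ℕ) : Subgroup (Perm V) where
  carrier := {g : Perm V | ∀ v : V, v.length = n → g v = v}
  one_mem' := fun _ _ => rfl
  mul_mem' := by
    intro g h hg hh v hv
    show g (h v) = v
    rw [hh v hv, hg v hv]
  inv_mem' := by
    intro g hg v hv
    show g⁻¹ v = v
    conv_lhs => rw [← hg v hv]
    exact Equiv.symm_apply_apply g v

/-- The `n`-th level stabilizer `Stab_G(n)` of `G`. -/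
def stabG (n : ℕ) : Subgroup (Perm V) := G ⊓ stabLevel n

/-- The commutator `[x, y] = x⁻¹ y⁻¹ x y` (paper convention). -/
def pc (x y : Perm V) : Perm V := x⁻¹ * y⁻¹ * x * y
/-- Conjugation `xʸ = y⁻¹ x y`. -/
def cj (x y : Perm V) : Perm V := y⁻¹ * x * y

/-- The normal closure in `G` of a subset `S` of `G`. -/
def ncl (S : Set (Perm V)) : Subgroup (Perm V) :=
  Subgroup.closure {x | ∃ s ∈ S, ∃ g ∈ G, x = g⁻¹ * s * g}

/-- `K = ⟨[a,b],[b,c],[b,d],[c,d], bcd⟩^G`. -/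
def K : Subgroup (Perm V) := ncl {pc a b, pc b c, pc b d, pc c d, b * c * d}

/-- The subgroup `[K, G]`. -/
def KG : Subgroup (Perm V) := ⁅K, G⁆

/-- The subgroup `C`, generated by `[K,G]` and `[a,b][b,c]`. -/
def Csub : Subgroup (Perm V) := KG ⊔ Subgroup.closure {pc a b * pc b c}

/-- `γ_n(G)`, the `n`-th term of the lower central series of `G` (starting at `γ₁ = G`),
viewed as a subgroup of `Perm V`. -/
def gammaG (n : ℕ) : Subgroup (Perm V) :=
  Subgroup.map G.subtype ((⊤ : Subgroup ↥G).lowerCentralSeries (n - 1))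

/-! For a first-level vertex `x`, the map `g ↦ x * g` sends `K` into `K` and `[K,G]` into `[K,G]`.
The reason is that every `g ∈ G` is the state at `x` of some element `p ∈ G` fixing `x`, and
conjugating or commuting `x * u` with such a `p` acts on the state `u` by `g`. Hence `x * K ≤ K` as
soon as `x * s ∈ K` for the five normal generators `s` of `K`, and `x * ⁅k, g⁆ = ⁅x * k, p⁆`
then gives `x * [K,G] ≤ [K,G]`. For the generators of `K`, and for the extra generator
`[a,b][b,c]` of `C`, explicit identities in `G` do the rest; they are computed at one vertex
and transported to the other by the root swap `a`. -/

open scoped commutatorElement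

attribute [simp] actB actC actD

@[simp] theorem actA_cons (x : Bool) (w : V) : actA (x :: w) = (!x) :: w := rfl

@[simp] theorem actA_actA (w : V) : actA (actA w) = w := actA_invol w
@[simp] theorem actB_actB (w : V) : actB (actB w) = w := actB_invol w
@[simp] theorem actC_actC (w : V) : actC (actC w) = w := actC_invol w
@[simp] theorem actD_actD (w : V) : actD (actD w) = w := actD_invol w

@[simp] theorem a_inv : a⁻¹ = a := rfl
@[simp] theorem b_inv : b⁻¹ = b := rfl
@[simp] theorem c_inv : c⁻¹ = c := rfl
@[simp] theorem d_inv : d⁻¹ = d := rfl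

section vstar

variable {v : V}

theorem vstar_apply_append (v t : V) (g : Perm V) : vstar v g (v ++ t) = v ++ g t := by
  simp [vstar, vstarFun]

theorem vstar_apply_of_not_prefix {w : V} (h : ¬v <+: w) (g : Perm V) : vstar v g w = w := by
  simp [vstar, vstarFun, h]

@[simp] theorem vstar_singleton_apply_cons (x y : Bool) (g : Perm V) (w : V) :
    vstar [x] g (y :: w) = y :: if y = x then g w else w := by
  by_cases h : y = x
  · subst h
    simpa using vstar_apply_append [y] w g
  · rw [if_neg h]
    exact vstar_apply_of_not_prefix (by simpa [List.cons_prefix_cons] using Ne.symm h) g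

def vstarHom (v : V) : Perm V →* Perm V where
  toFun := vstar v
  map_one' := Equiv.ext (vstarFun_id v)
  map_mul' g h := Equiv.ext fun w => (vstarFun_comp v g h w).symm

@[simp] theorem vstarHom_apply (v : V) (g : Perm V) : vstarHom v g = vstar v g := rfl

theorem vstar_conj_of_hasState {p g : Perm V} (hv : p v = v) (hp : hasState p v g)
    (u : Perm V) : p * vstar v u * p⁻¹ = vstar v (g * u * g⁻¹) := by
  rw [mul_inv_eq_iff_eq_mul]
  ext w : 1
  simp only [Perm.mul_apply]
  by_cases hw : v <+: w
  · obtain ⟨t, rfl⟩ := hw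
    rw [vstar_apply_append, hp, hp, hv, vstar_apply_append]
    simp
  · have hpw : ¬v <+: p w := by
      rintro ⟨s, hs⟩
      refine hw ⟨g⁻¹ s, p.injective ?_⟩
      rw [hp, hv]
      simpa using hs
    rw [vstar_apply_of_not_prefix hw, vstar_apply_of_not_prefix hpw]

theorem vstar_commutator_of_hasState {p g : Perm V} (hv : p v = v) (hp : hasState p v g)
    (u : Perm V) : ⁅vstar v u, p⁆ = vstar v ⁅u, g⁆ := by
  calc ⁅vstar v u, p⁆ = vstar v u * (p * vstar v u⁻¹ * p⁻¹) := by
        simp only [commutatorElement_def, ← vstarHom_apply, map_inv]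
        group
    _ = vstar v ⁅u, g⁆ := by
        rw [vstar_conj_of_hasState hv hp, ← vstarHom_apply, ← vstarHom_apply, ← map_mul,
          commutatorElement_def]
        simp only [mul_assoc, vstarHom_apply]

end vstar

def stateSubgroup (H : Subgroup (Perm V)) (v : V) : Subgroup (Perm V) where
  carrier := {g | ∃ p ∈ H, p v = v ∧ hasState p v g}
  one_mem' := ⟨1, H.one_mem, rfl, fun _ => rfl⟩
  mul_mem' := by
    rintro g g' ⟨p, hp, hpv, hps⟩ ⟨p', hp', hpv', hps'⟩
    refine ⟨p * p', H.mul_mem hp hp', by simp [hpv, hpv'], fun w => ?_⟩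
    rw [Perm.mul_apply, Perm.mul_apply, hps' w, hpv', hps, Perm.mul_apply]
  inv_mem' := by
    rintro g ⟨p, hp, hpv, hps⟩
    have hpv' : p⁻¹ v = v := by rw [Perm.inv_eq_iff_eq, hpv]
    refine ⟨p⁻¹, H.inv_mem hp, hpv', fun w => ?_⟩
    rw [hpv', Perm.inv_eq_iff_eq, hps, hpv]
    simp

theorem a_inv_mul_vstar_mul_a (x : Bool) (g : Perm V) :
    a⁻¹ * vstar [x] g * a = vstar [!x] g := by
  ext w : 1
  rcases w with _ | ⟨y, w⟩
  · rfl
  · cases x <;> cases y <;> simp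

theorem G_le_stateSubgroup (x : Bool) : G ≤ stateSubgroup G [x] := by
  have aba_mem : a * b * a ∈ G := mul_mem (mul_mem a_mem_G b_mem_G) a_mem_G
  have aca_mem : a * c * a ∈ G := mul_mem (mul_mem a_mem_G c_mem_G) a_mem_G
  have ada_mem : a * d * a ∈ G := mul_mem (mul_mem a_mem_G d_mem_G) a_mem_G
  refine (Subgroup.closure_le _).mpr ?_
  cases x <;> rintro g (rfl | rfl | rfl | rfl)
  · exact ⟨c, c_mem_G, rfl, fun _ => rfl⟩
  · exact ⟨a * d * a, ada_mem, rfl, fun _ => rfl⟩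
  · exact ⟨b, b_mem_G, rfl, fun _ => rfl⟩
  · exact ⟨a * c * a, aca_mem, rfl, fun _ => rfl⟩
  · exact ⟨b, b_mem_G, rfl, fun _ => rfl⟩
  · exact ⟨d, d_mem_G, rfl, fun _ => rfl⟩
  · exact ⟨a * b * a, aba_mem, rfl, fun _ => rfl⟩
  · exact ⟨c, c_mem_G, rfl, fun _ => rfl⟩

def Kgens : Set (Perm V) := {pc a b, pc b c, pc b d, pc c d, b * c * d}

theorem conj_mem_K_of_mem_Kgens {s g : Perm V} (hs : s ∈ Kgens) (hg : g ∈ G) :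
    g⁻¹ * s * g ∈ K :=
  Subgroup.subset_closure ⟨s, hs, g, hg, rfl⟩

theorem mem_K_of_mem_Kgens {s : Perm V} (hs : s ∈ Kgens) : s ∈ K := by
  simpa using conj_mem_K_of_mem_Kgens hs (one_mem G)

theorem conj_mem_K {g k : Perm V} (hg : g ∈ G) (hk : k ∈ K) : g⁻¹ * k * g ∈ K := by
  suffices K ≤ K.comap (MulAut.conj g⁻¹).toMonoidHom by simpa using this hk
  refine (Subgroup.closure_le _).mpr ?_
  rintro _ ⟨s, hs, h, hh, rfl⟩
  simpa [mul_assoc] using conj_mem_K_of_mem_Kgens hs (mul_mem hh hg)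

theorem conj_mem_KG {g k : Perm V} (hg : g ∈ G) (hk : k ∈ KG) : g⁻¹ * k * g ∈ KG := by
  suffices KG ≤ KG.comap (MulAut.conj g⁻¹).toMonoidHom by simpa using this hk
  refine Subgroup.commutator_le.mpr fun u hu h hh => ?_
  rw [Subgroup.mem_comap, map_commutatorElement]
  exact Subgroup.commutator_mem_commutator (by simpa using conj_mem_K hg hu)
    (by simpa using mul_mem (mul_mem (inv_mem hg) hh) hg)

theorem vstar_true_pc_a_b : vstar [true] (pc a b) = pc b d := by
  ext w : 1; rcases w with _ | ⟨x, w⟩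
  · rfl
  · cases x <;> simp [pc]

theorem vstar_true_pc_b_c : vstar [true] (pc b c) =
    (d⁻¹ * pc a b * d) * (a⁻¹ * pc a b * a) * ((a * b * a)⁻¹ * pc b d * (a * b * a)) := by
  ext w : 1; rcases w with _ | ⟨x, w⟩
  · rfl
  · cases x <;> simp [pc]

theorem vstar_true_pc_b_d : vstar [true] (pc b d) = (pc c d)⁻¹ := by
  ext w : 1; rcases w with _ | ⟨x, w⟩
  · rfl
  · cases x <;> simp [pc]

theorem vstar_true_pc_c_d : vstar [true] (pc c d) =
    pc a b * ((c * b)⁻¹ * pc a b * (c * b)) * pc b c := by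
  ext w : 1; rcases w with _ | ⟨x, w⟩
  · rfl
  · cases x <;> simp [pc]

theorem vstar_true_bcd : vstar [true] (b * c * d) =
    (d⁻¹ * pc a b * d) * (d⁻¹ * (b * c * d) * d) := by
  ext w : 1; rcases w with _ | ⟨x, w⟩
  · rfl
  · cases x <;> simp [pc]

theorem vstar_false_pc_a_b_mul_pc_b_c :
    vstar [false] (pc a b * pc b c) = ⁅pc a b, d⁆ * ⁅d⁻¹ * pc a b * d, b * a⁆ := by
  ext w : 1; rcases w with _ | ⟨x, w⟩
  · rfl
  · cases x <;> simp [pc, commutatorElement_def]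

theorem vstar_mem_K_of_mem_Kgens (x : Bool) {s : Perm V} (hs : s ∈ Kgens) : vstar [x] s ∈ K := by
  have gen : ∀ {s}, s ∈ Kgens → s ∈ K := mem_K_of_mem_Kgens
  have conj : ∀ {s g}, s ∈ Kgens → g ∈ G → g⁻¹ * s * g ∈ K := conj_mem_K_of_mem_Kgens
  have aba_mem : a * b * a ∈ G := mul_mem (mul_mem a_mem_G b_mem_G) a_mem_G
  have hs_true : vstar [true] s ∈ K := by
    rcases hs with rfl | rfl | rfl | rfl | rfl
    · rw [vstar_true_pc_a_b]
      exact gen (by simp [Kgens])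
    · rw [vstar_true_pc_b_c]
      exact mul_mem (mul_mem (conj (by simp [Kgens]) d_mem_G) (conj (by simp [Kgens]) a_mem_G))
        (conj (by simp [Kgens]) aba_mem)
    · rw [vstar_true_pc_b_d]
      exact inv_mem (gen (by simp [Kgens]))
    · rw [vstar_true_pc_c_d]
      exact mul_mem (mul_mem (gen (by simp [Kgens]))
        (conj (by simp [Kgens]) (mul_mem c_mem_G b_mem_G))) (gen (by simp [Kgens]))
    · rw [vstar_true_bcd]
      exact mul_mem (conj (by simp [Kgens]) d_mem_G) (conj (by simp [Kgens]) d_mem_G)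
  cases x
  · rw [← Bool.not_true, ← a_inv_mul_vstar_mul_a]
    exact conj_mem_K a_mem_G hs_true
  · exact hs_true

theorem vstar_mem_K (x : Bool) {k : Perm V} (hk : k ∈ K) : vstar [x] k ∈ K := by
  suffices K ≤ K.comap (vstarHom [x]) from this hk
  refine (Subgroup.closure_le _).mpr ?_
  rintro _ ⟨s, hs, g, hg, rfl⟩
  obtain ⟨p, hpG, hpv, hps⟩ := G_le_stateSubgroup x (inv_mem hg)
  have hconj := vstar_conj_of_hasState hpv hps s
  rw [inv_inv] at hconj
  show vstar [x] (g⁻¹ * s * g) ∈ K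
  rw [← hconj]
  simpa using conj_mem_K (inv_mem hpG) (vstar_mem_K_of_mem_Kgens x hs)

theorem vstar_mem_KG (x : Bool) {k : Perm V} (hk : k ∈ KG) : vstar [x] k ∈ KG := by
  suffices KG ≤ KG.comap (vstarHom [x]) from this hk
  refine Subgroup.commutator_le.mpr fun u hu g hg => ?_
  obtain ⟨p, hpG, hpv, hps⟩ := G_le_stateSubgroup x hg
  show vstar [x] ⁅u, g⁆ ∈ KG
  rw [← vstar_commutator_of_hasState hpv hps]
  exact Subgroup.commutator_mem_commutator (vstar_mem_K x hu) hpG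

theorem vstar_pc_a_b_mul_pc_b_c_mem_KG (x : Bool) : vstar [x] (pc a b * pc b c) ∈ KG := by
  have h_false : vstar [false] (pc a b * pc b c) ∈ KG := by
    rw [vstar_false_pc_a_b_mul_pc_b_c]
    exact mul_mem
      (Subgroup.commutator_mem_commutator (mem_K_of_mem_Kgens (by simp [Kgens])) d_mem_G)
      (Subgroup.commutator_mem_commutator (conj_mem_K_of_mem_Kgens (by simp [Kgens]) d_mem_G)
        (mul_mem b_mem_G a_mem_G))
  cases x
  · exact h_false
  · rw [← Bool.not_false, ← a_inv_mul_vstar_mul_a]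
    exact conj_mem_KG a_mem_G h_false

theorem Csub_le_comap_vstarHom (x : Bool) : Csub ≤ KG.comap (vstarHom [x]) :=
  sup_le (fun _ => vstar_mem_KG x)
    ((Subgroup.closure_le _).mpr (by rintro _ rfl; exact vstar_pc_a_b_mul_pc_b_c_mem_KG x))

/-- **Lemma.** `[K,G]` contains `X*C`. -/
theorem stmt12 : XstarSub 1 Csub ≤ KG := by
  refine (Subgroup.closure_le KG).mpr ?_
  rintro _ ⟨v, g, hv, hg, rfl⟩
  obtain ⟨x, rfl⟩ := List.length_eq_one_iff.mp hv
  exact Csub_le_comap_vstarHom x hg
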